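/- Calculus lemma for the Rényi EPI: for $0 < c < 1$ and $d = \frac{2}{c} - 1$, the function $F(x) = \frac{(1-x)^{d(1-x)}(1-y)^{d(1-y)}}{x^x y^y}$ with $y = c - x$ attains its minimum over $[0, c]$ at the endpoints $x = 0$ or $x = c$. -/

import Mathlib

open Real

/-- The function of the calculus lemma:
`F(x) = (1-x)^{d(1-x)} (1-y)^{d(1-y)} / (x^x y^y)` with `y = c - x`, written via
`exp`/`log` with the convention `0 · log 0 = 0` (Mathlib's `Real.log 0 = 0`). -/
noncomputable def calculusF (c d x : ℝ) : ℝ :=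
  Real.exp (d * (1 - x) * Real.log (1 - x) + d * (1 - (c - x)) * Real.log (1 - (c - x))
    - x * Real.log x - (c - x) * Real.log (c - x))

/-- The exponent of `calculusF`. -/
noncomputable def renyiG (c d x : ℝ) : ℝ :=
  d * ((1 - x) * Real.log (1 - x)) + d * ((1 - (c - x)) * Real.log (1 - (c - x)))
    - x * Real.log x - (c - x) * Real.log (c - x)

/-- The derivative of `renyiG`. -/
noncomputable def renyiP (c d x : ℝ) : ℝ :=
  d * (Real.log (1 - (c - x)) - Real.log (1 - x)) + (Real.log (c - x) - Real.log x)

lemma calculusF_eq (c d x : ℝ) : calculusF c d x = Real.exp (renyiG c d x) := by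
  unfold calculusF renyiG; ring_nf

lemma renyiG_symm (c d x : ℝ) : renyiG c d (c - x) = renyiG c d x := by
  unfold renyiG
  have h : c - (c - x) = x := by ring
  rw [h]; ring

lemma renyiG_continuous (c d : ℝ) : Continuous (renyiG c d) := by
  unfold renyiG
  fun_prop

lemma renyiG_hasDerivAt (c d x : ℝ) (hx : x ≠ 0) (h1 : (1:ℝ) - x ≠ 0)
    (h2 : c - x ≠ 0) (h3 : (1:ℝ) - (c - x) ≠ 0) :
    HasDerivAt (renyiG c d) (renyiP c d x) x := by
  have i1 : HasDerivAt (fun y : ℝ => 1 - y) (-1) x := (hasDerivAt_id x).const_sub 1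
  have i2 : HasDerivAt (fun y : ℝ => c - y) (-1) x := (hasDerivAt_id x).const_sub c
  have i3 : HasDerivAt (fun y : ℝ => 1 - (c - y)) 1 x := by
    simpa using i2.const_sub 1
  have A : HasDerivAt (fun y : ℝ => (1 - y) * Real.log (1 - y))
      ((Real.log (1 - x) + 1) * (-1)) x := (Real.hasDerivAt_mul_log h1).comp x i1
  have B : HasDerivAt (fun y : ℝ => (1 - (c - y)) * Real.log (1 - (c - y)))
      ((Real.log (1 - (c - x)) + 1) * 1) x := by
    have := (Real.hasDerivAt_mul_log h3).comp x i3; exact this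
  have C : HasDerivAt (fun y : ℝ => y * Real.log y) (Real.log x + 1) x :=
    Real.hasDerivAt_mul_log hx
  have D : HasDerivAt (fun y : ℝ => (c - y) * Real.log (c - y))
      ((Real.log (c - x) + 1) * (-1)) x := (Real.hasDerivAt_mul_log h2).comp x i2
  have E := (((A.const_mul d).add (B.const_mul d)).sub C).sub D
  refine E.congr_deriv ?_
  unfold renyiP; ring

lemma renyiP_hasDerivAt (c d x : ℝ) (hx : x ≠ 0) (h1 : (1:ℝ) - x ≠ 0)
    (h2 : c - x ≠ 0) (h3 : (1:ℝ) - (c - x) ≠ 0) :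
    HasDerivAt (renyiP c d)
      (d * ((1 - (c - x))⁻¹ + (1 - x)⁻¹) + (-(c - x)⁻¹ - x⁻¹)) x := by
  have i1 : HasDerivAt (fun y : ℝ => 1 - y) (-1) x := (hasDerivAt_id x).const_sub 1
  have i2 : HasDerivAt (fun y : ℝ => c - y) (-1) x := (hasDerivAt_id x).const_sub c
  have i3 : HasDerivAt (fun y : ℝ => 1 - (c - y)) 1 x := by
    simpa using i2.const_sub 1
  have A : HasDerivAt (fun y : ℝ => Real.log (1 - y)) ((1 - x)⁻¹ * (-1)) x :=
    (Real.hasDerivAt_log h1).comp x i1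
  have B : HasDerivAt (fun y : ℝ => Real.log (1 - (c - y))) ((1 - (c - x))⁻¹ * 1) x :=
    by have := (Real.hasDerivAt_log h3).comp x i3; exact this
  have C : HasDerivAt (fun y : ℝ => Real.log y) x⁻¹ x := Real.hasDerivAt_log hx
  have D : HasDerivAt (fun y : ℝ => Real.log (c - y)) ((c - x)⁻¹ * (-1)) x :=
    (Real.hasDerivAt_log h2).comp x i2
  have E := ((B.sub A).const_mul d).add (D.sub C)
  refine E.congr_deriv ?_
  ring

/-- For `0 < c < 1` and `d = 2/c - 1`, the function `F` attains its
minimum over `[0, c]` at the endpoints `x = 0` or `x = c`. -/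
theorem renyi_calculus_lemma (c d : ℝ) (hc : c ∈ Set.Ioo (0 : ℝ) 1)
    (hd : d = 2 / c - 1) :
    ∀ x ∈ Set.Icc (0 : ℝ) c, min (calculusF c d 0) (calculusF c d c) ≤ calculusF c d x := by
  obtain ⟨hc0, hc1⟩ := hc
  -- basic facts about arguments for x ∈ (0, c)
  have harg : ∀ y : ℝ, 0 < y → y < c →
      y ≠ 0 ∧ (1:ℝ) - y ≠ 0 ∧ c - y ≠ 0 ∧ (1:ℝ) - (c - y) ≠ 0 := by
    intro y hy0 hyc
    refine ⟨ne_of_gt hy0, by nlinarith, by nlinarith, by nlinarith⟩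
  -- P(c/2) = 0
  have hPhalf : renyiP c d (c / 2) = 0 := by
    unfold renyiP
    have h : c - c / 2 = c / 2 := by ring
    rw [h]; ring
  -- P ≥ 0 on (0, c/2]
  have hPnonneg : ∀ x : ℝ, 0 < x → x ≤ c / 2 → 0 ≤ renyiP c d x := by
    intro x hx0 hxh
    have hanti : AntitoneOn (renyiP c d) (Set.Icc x (c / 2)) := by
      apply antitoneOn_of_deriv_nonpos (convex_Icc _ _)
      · intro y hy
        obtain ⟨hy1, hy2⟩ := hy
        have hy0 : 0 < y := lt_of_lt_of_le hx0 hy1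
        have hyc : y < c := by linarith
        obtain ⟨n1, n2, n3, n4⟩ := harg y hy0 hyc
        exact (renyiP_hasDerivAt c d y n1 n2 n3 n4).continuousAt.continuousWithinAt
      · intro y hy
        rw [interior_Icc] at hy
        obtain ⟨hy1, hy2⟩ := hy
        have hy0 : 0 < y := lt_trans hx0 hy1
        have hyc : y < c := by linarith
        obtain ⟨n1, n2, n3, n4⟩ := harg y hy0 hyc
        exact (renyiP_hasDerivAt c d y n1 n2 n3 n4).differentiableAt.differentiableWithinAt
      · intro y hy
        rw [interior_Icc] at hy
        obtain ⟨hy1, hy2⟩ := hy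
        have hy0 : 0 < y := lt_trans hx0 hy1
        have hyc : y < c := by linarith
        obtain ⟨n1, n2, n3, n4⟩ := harg y hy0 hyc
        rw [(renyiP_hasDerivAt c d y n1 n2 n3 n4).deriv]
        -- show d * ((1-(c-y))⁻¹ + (1-y)⁻¹) + (-(c-y)⁻¹ - y⁻¹) ≤ 0
        have p1 : (0:ℝ) < 1 - (c - y) := by nlinarith
        have p2 : (0:ℝ) < 1 - y := by nlinarith
        have p3 : (0:ℝ) < c - y := by nlinarith
        have key : d * ((1 - (c - y))⁻¹ + (1 - y)⁻¹) + (-(c - y)⁻¹ - y⁻¹)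
            = ((2 - c) ^ 2 * ((c - y) * y) - c ^ 2 * ((1 - (c - y)) * (1 - y)))
              / (c * ((1 - (c - y)) * (1 - y)) * ((c - y) * y)) := by
          rw [hd]; field_simp; ring
        rw [key]
        apply div_nonpos_of_nonpos_of_nonneg
        · nlinarith [mul_nonneg (by linarith : (0:ℝ) ≤ 1 - c) (sq_nonneg (2 * y - c))]
        · positivity
    have hmem1 : x ∈ Set.Icc x (c / 2) := ⟨le_refl x, hxh⟩
    have hmem2 : c / 2 ∈ Set.Icc x (c / 2) := ⟨hxh, le_refl _⟩
    have := hanti hmem1 hmem2 hxh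
    rw [hPhalf] at this
    exact this
  -- G monotone on [0, c/2]
  have hmono : MonotoneOn (renyiG c d) (Set.Icc (0:ℝ) (c / 2)) := by
    apply monotoneOn_of_deriv_nonneg (convex_Icc _ _)
      ((renyiG_continuous c d).continuousOn)
    · intro y hy
      rw [interior_Icc] at hy
      obtain ⟨hy1, hy2⟩ := hy
      have hyc : y < c := by linarith
      obtain ⟨n1, n2, n3, n4⟩ := harg y hy1 hyc
      exact (renyiG_hasDerivAt c d y n1 n2 n3 n4).differentiableAt.differentiableWithinAt
    · intro y hy
      rw [interior_Icc] at hy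
      obtain ⟨hy1, hy2⟩ := hy
      have hyc : y < c := by linarith
      obtain ⟨n1, n2, n3, n4⟩ := harg y hy1 hyc
      rw [(renyiG_hasDerivAt c d y n1 n2 n3 n4).deriv]
      exact hPnonneg y hy1 (le_of_lt hy2)
  -- G(0) ≤ G(x) on [0, c]
  have hG0 : ∀ x ∈ Set.Icc (0:ℝ) c, renyiG c d 0 ≤ renyiG c d x := by
    intro x ⟨hx0, hxc⟩
    rcases le_or_gt x (c / 2) with h | h
    · exact hmono ⟨le_refl 0, by linarith⟩ ⟨hx0, h⟩ hx0
    · have : renyiG c d 0 ≤ renyiG c d (c - x) :=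
        hmono ⟨le_refl 0, by linarith⟩ ⟨by linarith, by linarith⟩ (by linarith)
      rwa [renyiG_symm] at this
  -- F(c) = F(0)
  have hFc : calculusF c d c = calculusF c d 0 := by
    rw [calculusF_eq, calculusF_eq]
    congr 1
    have := renyiG_symm c d 0
    simpa using this
  intro x hx
  rw [hFc, min_self, calculusF_eq, calculusF_eq]
  exact Real.exp_le_exp.mpr (hG0 x hx)
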